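/- Let G be a simple graph. The following are equivalent: (1) G has a proper 3-colouring; for every pair of vertices u, v not adjacent in G there is a proper 3-colouring c of G with c(u) = c(v); and for every pair of distinct vertices u, v there is a proper 3-colouring c of G with c(u) ≠ c(v); (2) there exist a nonempty index type ι and an injective map f from the vertices of G to functions ι → Fin 3 such that for all vertices u, v: u and v are adjacent in G if and only if f(u)(i) ≠ f(v)(i) for every i ∈ ι (that is, G is isomorphic to an induced subgraph of a nonempty direct power of the complete graph K₃). -/

import Mathlib

/-!
The coordinates of a map `f : V → (ι → α)` with `G.Adj u v ↔ ∀ i, f u i ≠ f v i` are proper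
colourings; a coordinate identifying `u` and `v` exists iff they are non-adjacent, and one
separating them exists iff `f u ≠ f v`. Conversely, indexing the power by the set of all proper
colourings and mapping each vertex to its tuple of colours gives such an `f`, which is faithful
exactly when non-adjacent vertices can be identified and injective exactly when distinct
vertices can be separated.
-/

universe u

namespace SimpleGraph

variable {V ι α : Type*} {G : SimpleGraph V}

def IsProperColoring (G : SimpleGraph V) (c : V → α) : Prop :=
  ∀ u v, G.Adj u v → c u ≠ c v

section Coordinates

variable {f : V → ι → α}

theorem isProperColoring_coord (hf : ∀ u v, G.Adj u v → ∀ i, f u i ≠ f v i) (i : ι) :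
    G.IsProperColoring fun v => f v i :=
  fun u v h => hf u v h i

theorem exists_isProperColoring_eq_of_not_adj (hf : ∀ u v, G.Adj u v ↔ ∀ i, f u i ≠ f v i)
    {u v : V} (huv : ¬G.Adj u v) : ∃ c : V → α, G.IsProperColoring c ∧ c u = c v := by
  obtain ⟨i, hi⟩ : ∃ i, f u i = f v i := by
    simpa only [not_forall, not_not] using mt (hf u v).2 huv
  exact ⟨_, isProperColoring_coord (fun u v => (hf u v).1) i, hi⟩

theorem exists_isProperColoring_ne_of_ne (hf : ∀ u v, G.Adj u v → ∀ i, f u i ≠ f v i)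
    (hinj : Function.Injective f) {u v : V} (huv : u ≠ v) :
    ∃ c : V → α, G.IsProperColoring c ∧ c u ≠ c v := by
  obtain ⟨i, hi⟩ := Function.ne_iff.1 (hinj.ne huv)
  exact ⟨_, isProperColoring_coord hf i, hi⟩

end Coordinates

def properColoringEval (G : SimpleGraph V) (α : Type*) (v : V)
    (c : {c : V → α // G.IsProperColoring c}) : α :=
  c.1 v

theorem properColoringEval_injective
    (hsep : ∀ u v, u ≠ v → ∃ c : V → α, G.IsProperColoring c ∧ c u ≠ c v) :
    Function.Injective (properColoringEval G α) := by
  intro u v huv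
  by_contra hne
  obtain ⟨c, hc, hcuv⟩ := hsep u v hne
  exact hcuv (congrFun huv ⟨c, hc⟩)

theorem adj_iff_forall_properColoringEval_ne
    (hident : ∀ u v, ¬G.Adj u v → ∃ c : V → α, G.IsProperColoring c ∧ c u = c v) (u v : V) :
    G.Adj u v ↔ ∀ c, properColoringEval G α u c ≠ properColoringEval G α v c := by
  refine ⟨fun h c => c.2 u v h, fun h => ?_⟩
  by_contra hnadj
  obtain ⟨c, hc, hcuv⟩ := hident u v hnadj
  exact h ⟨c, hc⟩ hcuv

end SimpleGraph

open SimpleGraph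

theorem stmt_4 {V : Type u} (G : SimpleGraph V) :
    ((∃ c : V → Fin 3, ∀ u v : V, G.Adj u v → c u ≠ c v) ∧
      (∀ u v : V, ¬ G.Adj u v →
        ∃ c : V → Fin 3, (∀ x y : V, G.Adj x y → c x ≠ c y) ∧ c u = c v) ∧
      (∀ u v : V, u ≠ v →
        ∃ c : V → Fin 3, (∀ x y : V, G.Adj x y → c x ≠ c y) ∧ c u ≠ c v)) ↔
    (∃ (ι : Type u) (_ : Nonempty ι) (f : V → ι → Fin 3),
      Function.Injective f ∧
        ∀ u v : V, G.Adj u v ↔ ∀ i : ι, f u i ≠ f v i) := by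
  constructor
  · rintro ⟨⟨c, hc⟩, hident, hsep⟩
    exact ⟨{c : V → Fin 3 // G.IsProperColoring c}, ⟨⟨c, hc⟩⟩, properColoringEval G (Fin 3),
      properColoringEval_injective hsep, adj_iff_forall_properColoringEval_ne hident⟩
  · rintro ⟨ι, ⟨i⟩, f, hinj, hf⟩
    have hcoord : ∀ u v, G.Adj u v → ∀ i, f u i ≠ f v i := fun u v => (hf u v).1
    exact ⟨⟨_, isProperColoring_coord hcoord i⟩,
      fun _ _ => exists_isProperColoring_eq_of_not_adj hf,
      fun _ _ => exists_isProperColoring_ne_of_ne hcoord hinj⟩
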